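/- Let n ≥ 1, let μ be a nonzero finite Borel measure on ℝ^{n+1} with compact support, and let I be a nonempty compact subset of (0, ∞). Then the local entropy λ^I(μ) is attained: there exist x̃₀ in the closed convex hull of the support of μ and t̃₀ ∈ I such that F_{x̃₀,t̃₀}(μ) = λ^I(μ). -/

import Mathlib

open MeasureTheory Metric Set

/-- The F-functional `F_{x₀,t₀}(μ) = (4π t₀)^{-n/2} ∫ exp(-‖x-x₀‖²/(4t₀)) dμ(x)`. -/
noncomputable def Ffn (n : ℕ) (μ : Measure (EuclideanSpace ℝ (Fin (n + 1))))
    (x₀ : EuclideanSpace ℝ (Fin (n + 1))) (t₀ : ℝ) : ℝ :=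
  (4 * Real.pi * t₀) ^ (-(n : ℝ) / 2) *
    ∫ x, Real.exp (-‖x - x₀‖ ^ 2 / (4 * t₀)) ∂μ

/-- The local entropy `λ^I(μ) = sup {F_{x₀,t₀}(μ) : x₀ ∈ ℝ^{n+1}, t₀ ∈ I}`. -/
noncomputable def localEntropyR (n : ℕ) (I : Set ℝ)
    (μ : Measure (EuclideanSpace ℝ (Fin (n + 1)))) : ℝ :=
  ⨆ (x₀ : EuclideanSpace ℝ (Fin (n + 1))) (t₀ : I), Ffn n μ x₀ (t₀ : ℝ)

/-- The support of a measure on a metric space: points all of whose neighbourhoods have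
positive measure. -/
def measureSupport {n : ℕ} (μ : Measure (EuclideanSpace ℝ (Fin (n + 1)))) :
    Set (EuclideanSpace ℝ (Fin (n + 1))) :=
  {x | ∀ r : ℝ, 0 < r → 0 < μ (ball x r)}

/-!
Moving the centre `x₀` to its nearest point in the closed convex hull `C` of the support brings
it closer to every point of `C`, hence (the Gaussian weight being decreasing in the distance)
does not decrease `F_{x₀,t₀}(μ)`. So `λ^I(μ)` is the supremum of `F` over the compact set
`C × I`, on which `F` is continuous by dominated convergence and therefore attains its maximum.
-/

theorem exists_mem_forall_norm_sub_le_of_isComplete_convex {F : Type*} [NormedAddCommGroup F]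
    [InnerProductSpace ℝ F] {K : Set F} (hne : K.Nonempty) (hK : IsComplete K)
    (hconv : Convex ℝ K) (u : F) : ∃ v ∈ K, ∀ w ∈ K, ‖w - v‖ ≤ ‖w - u‖ := by
  obtain ⟨v, hv, hmin⟩ := exists_norm_eq_iInf_of_complete_convex hne hK hconv u
  have hinner := (norm_eq_iInf_iff_real_inner_le_zero hconv hv).1 hmin
  refine ⟨v, hv, fun w hw => ?_⟩
  have hexpand : ‖w - u‖ ^ 2 = ‖w - v‖ ^ 2 - 2 * inner ℝ (u - v) (w - v) + ‖u - v‖ ^ 2 := by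
    rw [← sub_sub_sub_cancel_right w u v, norm_sub_sq_real, real_inner_comm]
  nlinarith [hinner w hw, norm_nonneg (w - v), norm_nonneg (w - u), sq_nonneg ‖u - v‖]

theorem ciSup_ciSup_eq_of_forall_le {ι κ α : Type*} [ConditionallyCompleteLattice α]
    {f : ι → κ → α} {i : ι} {j : κ} (h : ∀ i' j', f i' j' ≤ f i j) :
    ⨆ i', ⨆ j', f i' j' = f i j := by
  have : Nonempty ι := ⟨i⟩
  have : Nonempty κ := ⟨j⟩
  have hinner : ∀ i', ⨆ j', f i' j' ≤ f i j := fun i' => ciSup_le (h i')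
  refine le_antisymm (ciSup_le hinner) ?_
  calc f i j ≤ ⨆ j', f i j' := le_ciSup ⟨f i j, forall_mem_range.2 (h i)⟩ j
    _ ≤ ⨆ i', ⨆ j', f i' j' := le_ciSup ⟨f i j, forall_mem_range.2 hinner⟩ i

theorem Real.exp_neg_sq_div_le_one (a : ℝ) {t : ℝ} (ht : 0 ≤ t) :
    Real.exp (-a ^ 2 / (4 * t)) ≤ 1 :=
  Real.exp_le_one_iff.2 <|
    div_nonpos_of_nonpos_of_nonneg (neg_nonpos.2 (sq_nonneg a)) (by linarith)

theorem measureSupport_eq_support {n : ℕ} (μ : Measure (EuclideanSpace ℝ (Fin (n + 1)))) :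
    measureSupport μ = μ.support := by
  ext x
  exact (nhds_basis_ball.mem_measureSupport).symm

section Ffn

variable {n : ℕ} {μ : Measure (EuclideanSpace ℝ (Fin (n + 1)))}

theorem integrable_exp_neg_norm_sub_sq_div [IsFiniteMeasure μ]
    (x₀ : EuclideanSpace ℝ (Fin (n + 1))) {t : ℝ} (ht : 0 ≤ t) :
    Integrable (fun x => Real.exp (-‖x - x₀‖ ^ 2 / (4 * t))) μ := by
  refine (integrable_const (1 : ℝ)).mono' (Continuous.aestronglyMeasurable (by fun_prop)) ?_
  filter_upwards with x
  rw [Real.norm_of_nonneg (Real.exp_pos _).le]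
  exact Real.exp_neg_sq_div_le_one _ ht

theorem Ffn_le_Ffn_of_ae_norm_sub_le [IsFiniteMeasure μ] {u v : EuclideanSpace ℝ (Fin (n + 1))}
    {t : ℝ} (ht : 0 < t) (h : ∀ᵐ x ∂μ, ‖x - v‖ ≤ ‖x - u‖) : Ffn n μ u t ≤ Ffn n μ v t := by
  refine mul_le_mul_of_nonneg_left ?_ (by positivity)
  refine integral_mono_ae (integrable_exp_neg_norm_sub_sq_div u ht.le)
    (integrable_exp_neg_norm_sub_sq_div v ht.le) ?_
  filter_upwards [h] with x hx
  gcongr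

theorem exists_mem_forall_Ffn_le [IsFiniteMeasure μ] {C : Set (EuclideanSpace ℝ (Fin (n + 1)))}
    (hne : C.Nonempty) (hC : IsComplete C) (hconv : Convex ℝ C) (hae : ∀ᵐ x ∂μ, x ∈ C)
    (u : EuclideanSpace ℝ (Fin (n + 1))) :
    ∃ v ∈ C, ∀ t, 0 < t → Ffn n μ u t ≤ Ffn n μ v t := by
  obtain ⟨v, hv, hcloser⟩ := exists_mem_forall_norm_sub_le_of_isComplete_convex hne hC hconv u
  exact ⟨v, hv, fun t ht => Ffn_le_Ffn_of_ae_norm_sub_le ht (hae.mono hcloser)⟩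

variable (μ) in
theorem continuousOn_Ffn [IsFiniteMeasure μ] :
    ContinuousOn (fun q : EuclideanSpace ℝ (Fin (n + 1)) × ℝ => Ffn n μ q.1 q.2)
      {q | 0 < q.2} := by
  refine (isOpen_lt continuous_const continuous_snd).continuousOn_iff.2 fun p (hp : 0 < p.2) => ?_
  have hpos : ∀ᶠ q : EuclideanSpace ℝ (Fin (n + 1)) × ℝ in nhds p, 0 < q.2 :=
    (isOpen_lt continuous_const continuous_snd).mem_nhds hp
  refine ContinuousAt.mul ?_ ?_
  · exact (continuous_const.mul continuous_snd).continuousAt.rpow_const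
      (.inl (mul_pos (by positivity) hp).ne')
  refine continuousAt_of_dominated (bound := fun _ => 1)
    (Filter.Eventually.of_forall fun q => Continuous.aestronglyMeasurable (by fun_prop)) ?_
    (integrable_const 1) (Filter.Eventually.of_forall fun x => ?_)
  · filter_upwards [hpos] with q hq
    filter_upwards with x
    rw [Real.norm_of_nonneg (Real.exp_pos _).le]
    exact Real.exp_neg_sq_div_le_one _ hq.le
  · exact Real.continuous_exp.continuousAt.comp
      (ContinuousAt.div (by fun_prop) (by fun_prop) (by positivity))

end Ffn

theorem stmt_14_general (n : ℕ) (μ : Measure (EuclideanSpace ℝ (Fin (n + 1))))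
    [IsFiniteMeasure μ] (hμ : μ ≠ 0)
    (hcpt : ∃ K : Set (EuclideanSpace ℝ (Fin (n + 1))), IsCompact K ∧ μ Kᶜ = 0)
    (I : Set ℝ) (hne : I.Nonempty) (hIcpt : IsCompact I) (hIpos : I ⊆ Ioi (0 : ℝ)) :
    ∃ x₀ ∈ closure (convexHull ℝ (measureSupport μ)), ∃ t₀ ∈ I,
      Ffn n μ x₀ t₀ = localEntropyR n I μ := by
  rw [measureSupport_eq_support]
  set C := closure (convexHull ℝ μ.support)
  obtain ⟨K, hK, hKc⟩ := hcpt
  have hsupp : μ.support ⊆ K := Measure.support_subset_of_isClosed hK.isClosed (mem_ae_iff.2 hKc)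
  have hCcpt : IsCompact C :=
    (isBounded_convexHull.2 (hK.isBounded.subset hsupp)).isCompact_closure
  have hsuppC : μ.support ⊆ C := (subset_convexHull ℝ _).trans subset_closure
  have hCne : C.Nonempty := (Measure.nonempty_support hμ).mono hsuppC
  have hae : ∀ᵐ x ∂μ, x ∈ C := Filter.mem_of_superset Measure.support_mem_ae hsuppC
  obtain ⟨p, ⟨hpC, hpI⟩, hpmax⟩ := (hCcpt.prod hIcpt).exists_isMaxOn (hCne.prod hne)
    ((continuousOn_Ffn μ).mono fun q hq => hIpos hq.2)
  have hle : ∀ x₀ (t : I), Ffn n μ x₀ t ≤ Ffn n μ p.1 p.2 := fun x₀ t => by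
    obtain ⟨v, hv, hFv⟩ := exists_mem_forall_Ffn_le hCne hCcpt.isComplete
      (convex_convexHull ℝ _).closure hae x₀
    exact (hFv t (hIpos t.2)).trans (hpmax (mk_mem_prod hv t.2))
  exact ⟨p.1, hpC, p.2, hpI, (ciSup_ciSup_eq_of_forall_le (j := (⟨p.2, hpI⟩ : I)) hle).symm⟩

theorem stmt_14 (n : ℕ) (hn : 1 ≤ n) (μ : Measure (EuclideanSpace ℝ (Fin (n + 1))))
    [IsFiniteMeasure μ] (hμ : μ ≠ 0)
    (hcpt : ∃ K : Set (EuclideanSpace ℝ (Fin (n + 1))), IsCompact K ∧ μ Kᶜ = 0)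
    (I : Set ℝ) (hne : I.Nonempty) (hIcpt : IsCompact I) (hIpos : I ⊆ Ioi (0 : ℝ)) :
    ∃ x₀ ∈ closure (convexHull ℝ (measureSupport μ)), ∃ t₀ ∈ I,
      Ffn n μ x₀ t₀ = localEntropyR n I μ :=
  stmt_14_general n μ hμ hcpt I hne hIcpt hIpos
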